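/- Let b be a holomorphic map of the open unit disk 𝔻 ⊂ ℂ into itself and let f : 𝔻 → ℂ satisfy that the kernel (z,w) ↦ (1 − b(z)·conj(b(w)))/(1 − z·conj(w)) − f(z)·conj(f(w)) is positive semidefinite on 𝔻. Then for every function g analytic on 𝔻 whose Taylor coefficients a_n = g^{(n)}(0)/n! satisfy ∑_{n≥0} |a_n|² < ∞, the function h(z) = f(z)·g(b(z)) is analytic on 𝔻 and its Taylor coefficients c_n = h^{(n)}(0)/n! satisfy ∑_{n≥0} |c_n|² ≤ ∑_{n≥0} |a_n|². (This is Theorem 1: the weighted composition operator T_f C_b is bounded on H² with ‖T_f C_b‖ ≤ ‖f‖_{H(b)}.) -/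

import Mathlib

/-!
Realise `H²` as `ℓ²` of Taylor coefficients. There the Szegő kernel `1 / (1 - z w̄)` is the Gram
kernel `⟪k_z, k_w⟫` of the vectors `k_z = (z̄ⁿ)ₙ`, and a function `h` on the disk lies in `H²`
with norm at most `M` exactly when `M² ⟪k_z, k_w⟫ - h(z) conj (h w)` is a positive semidefinite
kernel (Cauchy–Schwarz in one direction, Hahn–Banach and Riesz in the other). Apply this to `g`
and pull the kernel back along `b`. Since
`(1 - b(z) conj (b w)) / (1 - z w̄) · 1 / (1 - b(z) conj (b w)) = 1 / (1 - z w̄)`,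
the Schur product theorem combines the positivity hypothesis on `f` with the one for `g ∘ b` into
positivity for `f · (g ∘ b)`, with `M = ‖g‖_{H²}`.
-/

open Complex Metric ComplexConjugate
open scoped ComplexOrder

noncomputable section

/-- A kernel `K : X → X → ℂ` is positive semidefinite on a set `S`: for all finite
families of points of `S` and scalars, the associated quadratic form is a
nonnegative real number (using the partial order on `ℂ`). -/
def IsPSDKernelOn {X : Type*} (K : X → X → ℂ) (S : Set X) : Prop :=
  ∀ (n : ℕ) (x : Fin n → X), (∀ i, x i ∈ S) → ∀ c : Fin n → ℂ,
    0 ≤ ∑ i, ∑ j, c i * conj (c j) * K (x i) (x j)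

open scoped InnerProductSpace lp

namespace IsPSDKernelOn

variable {X : Type*} {K L : X → X → ℂ} {S : Set X}

theorem nonneg_of_fintype (hK : IsPSDKernelOn K S) {ι : Type*} [Fintype ι] (x : ι → X)
    (hx : ∀ i, x i ∈ S) (c : ι → ℂ) : 0 ≤ ∑ i, ∑ j, c i * conj (c j) * K (x i) (x j) := by
  let e := Fintype.equivFin ι
  refine (hK _ (x ∘ e.symm) (fun i => hx _) (c ∘ e.symm)).trans_eq ?_
  exact Fintype.sum_equiv e.symm _ _ fun i => Fintype.sum_equiv e.symm _ _ fun j => rfl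

theorem conj_apply (hK : IsPSDKernelOn K S) {z w : X} (hz : z ∈ S) (hw : w ∈ S) :
    conj (K z w) = K w z := by
  have form (c₁ c₂ : ℂ) : (c₁ * conj c₁ * K z z + c₁ * conj c₂ * K z w
      + (c₂ * conj c₁ * K w z + c₂ * conj c₂ * K w w)).im = 0 := by
    simpa [Fin.sum_univ_two] using
      (Complex.nonneg_iff.mp (hK 2 ![z, w] (by simp [Fin.forall_fin_two, hz, hw]) ![c₁, c₂])).2.symm
  -- the form is real-valued; these four coefficient vectors polarize it
  have h₁ := form 1 0
  have h₂ := form 0 1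
  have h₃ := form 1 1
  have h₄ := form 1 I
  simp only [map_one, mul_one, one_mul, map_zero, mul_zero, zero_mul, add_zero, zero_add, add_im,
    conj_I, mul_neg, neg_mul, I_mul_I, neg_neg, neg_im, mul_im, I_re, I_im] at h₁ h₂ h₃ h₄
  apply Complex.ext <;> simp only [conj_re, conj_im] <;> linarith

theorem congr (hK : IsPSDKernelOn K S) (h : ∀ z ∈ S, ∀ w ∈ S, K z w = L z w) :
    IsPSDKernelOn L S := by
  intro n x hx c
  simpa only [h _ (hx _) _ (hx _)] using hK n x hx c

theorem comp {Y : Type*} {K : Y → Y → ℂ} {T : Set Y} (hK : IsPSDKernelOn K T) {b : X → Y}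
    (hb : Set.MapsTo b S T) : IsPSDKernelOn (fun z w => K (b z) (b w)) S :=
  fun n x hx => hK n (b ∘ x) fun i => hb (hx i)

theorem add (hK : IsPSDKernelOn K S) (hL : IsPSDKernelOn L S) :
    IsPSDKernelOn (fun z w => K z w + L z w) S := by
  intro n x hx c
  simpa only [mul_add, Finset.sum_add_distrib] using add_nonneg (hK n x hx c) (hL n x hx c)

end IsPSDKernelOn

open Matrix in
theorem isPSDKernelOn_iff_posSemidef {X : Type*} {K : X → X → ℂ} {S : Set X} :
    IsPSDKernelOn K S ↔
      ∀ n (x : Fin n → X), (∀ i, x i ∈ S) → (Matrix.of fun i j => K (x i) (x j)).PosSemidef := by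
  have form n (x : Fin n → X) (c : Fin n → ℂ) :
      star c ⬝ᵥ ((Matrix.of fun i j => K (x i) (x j)) *ᵥ c) =
        ∑ i, ∑ j, conj (c i) * conj (conj (c j)) * K (x i) (x j) := by
    simp only [dotProduct, Matrix.mulVec, Matrix.of_apply, Finset.mul_sum, Pi.star_apply,
      RCLike.star_def, Complex.conj_conj]
    exact Finset.sum_congr rfl fun i _ => Finset.sum_congr rfl fun j _ => by ring
  refine ⟨fun hK n x hx => .of_dotProduct_mulVec_nonneg ?_ fun c => ?_, fun hK n x hx c => ?_⟩
  · ext i j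
    exact hK.conj_apply (hx j) (hx i)
  · exact (form n x c).symm ▸ hK n x hx _
  · simpa only [form, Function.comp_apply, Complex.conj_conj] using
      (hK n x hx).dotProduct_mulVec_nonneg (conj ∘ c)

theorem isPSDKernelOn_mul_conj {X : Type*} (f : X → ℂ) (S : Set X) :
    IsPSDKernelOn (fun z w => f z * conj (f w)) S := by
  intro n x _ c
  have h : ∑ i, ∑ j, c i * conj (c j) * (f (x i) * conj (f (x j))) =
      (∑ i, c i * f (x i)) * conj (∑ i, c i * f (x i)) := by
    simp only [map_sum, map_mul, Finset.sum_mul_sum]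
    exact Finset.sum_congr rfl fun i _ => Finset.sum_congr rfl fun j _ => by ring
  rw [h, Complex.mul_conj]
  exact Complex.zero_le_real.mpr (Complex.normSq_nonneg _)

namespace IsPSDKernelOn

variable {X : Type*} {K L : X → X → ℂ} {S : Set X}

theorem mul (hK : IsPSDKernelOn K S) (hL : IsPSDKernelOn L S) :
    IsPSDKernelOn (fun z w => K z w * L z w) S := by
  rw [isPSDKernelOn_iff_posSemidef] at *
  exact fun n x hx => (hK n x hx).hadamard (hL n x hx)

/-- `K·L - (fg)(fg)* = (K - ff*)(L - gg*) + (K - ff*)·gg* + ff*·(L - gg*)`, a sum of Schur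
products of positive semidefinite kernels. -/
theorem mul_sub_mul {f g : X → ℂ} (hK : IsPSDKernelOn (fun z w => K z w - f z * conj (f w)) S)
    (hL : IsPSDKernelOn (fun z w => L z w - g z * conj (g w)) S) :
    IsPSDKernelOn (fun z w => K z w * L z w - f z * g z * conj (f w * g w)) S := by
  have hF := isPSDKernelOn_mul_conj f S
  have hG := isPSDKernelOn_mul_conj g S
  refine (((hK.mul hL).add (hK.mul hG)).add (hF.mul hL)).congr fun z _ w _ => ?_
  simp only [map_mul]
  ring

end IsPSDKernelOn

theorem exists_strongDual_comp_eq {𝕜 V F : Type*} [RCLike 𝕜] [AddCommGroup V] [Module 𝕜 V]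
    [NormedAddCommGroup F] [NormedSpace 𝕜 F] (T : V →ₗ[𝕜] F) (L : V →ₗ[𝕜] 𝕜) {M : ℝ}
    (hM : 0 ≤ M) (hL : ∀ v, ‖L v‖ ≤ M * ‖T v‖) :
    ∃ ψ : StrongDual 𝕜 F, ‖ψ‖ ≤ M ∧ ∀ v, ψ (T v) = L v := by
  have hker : LinearMap.ker T ≤ LinearMap.ker L := fun v hv => by
    simpa [LinearMap.mem_ker.mp hv] using hL v
  let L' : LinearMap.range T →ₗ[𝕜] 𝕜 :=
    (LinearMap.ker T).liftQ L hker ∘ₗ T.quotKerEquivRange.symm.toLinearMap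
  have hL' v : L' ⟨T v, v, rfl⟩ = L v :=
    congrArg ((LinearMap.ker T).liftQ L hker) (T.quotKerEquivRange_symm_apply_image v ⟨v, rfl⟩)
  have hbound : ∀ y, ‖L' y‖ ≤ M * ‖y‖ := by
    rintro ⟨_, v, rfl⟩
    exact (hL' v).symm ▸ hL v
  obtain ⟨ψ, hψ, hψ_norm⟩ := exists_extension_norm_eq _ (L'.mkContinuous M hbound)
  exact ⟨ψ, hψ_norm ▸ L'.mkContinuous_norm_le hM hbound, fun v => (hψ ⟨T v, v, rfl⟩).trans (hL' v)⟩

section Gram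

variable {E : Type*} [NormedAddCommGroup E] [InnerProductSpace ℂ E]

theorem sum_sum_mul_conj_mul_gram_sub {ι : Type*} [Fintype ι] (v : ι → E) (s c : ι → ℂ) (M : ℝ) :
    ∑ i, ∑ j, c i * conj (c j) * ((M : ℂ) ^ 2 * ⟪v i, v j⟫_ℂ - s i * conj (s j)) =
      ((M ^ 2 * ‖∑ i, conj (c i) • v i‖ ^ 2 - ‖∑ i, c i * s i‖ ^ 2 : ℝ) : ℂ) := by
  set u := ∑ i, conj (c i) • v i
  have hu : ((‖u‖ ^ 2 : ℝ) : ℂ) = ∑ i, ∑ j, c i * conj (c j) * ⟪v i, v j⟫_ℂ := by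
    have h : ((‖u‖ ^ 2 : ℝ) : ℂ) = ⟪u, u⟫_ℂ := by
      exact_mod_cast (inner_self_eq_norm_sq_to_K (𝕜 := ℂ) u).symm
    simp only [h, u, sum_inner, inner_sum, inner_smul_left, inner_smul_right, Complex.conj_conj,
      Finset.mul_sum]
    exact Finset.sum_comm.trans
      (Finset.sum_congr rfl fun i _ => Finset.sum_congr rfl fun j _ => by ring)
  have hs : ((‖∑ i, c i * s i‖ ^ 2 : ℝ) : ℂ) =
      ∑ i, ∑ j, c i * conj (c j) * (s i * conj (s j)) := by
    rw [← Complex.normSq_eq_norm_sq, ← Complex.mul_conj]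
    simp only [map_sum, map_mul, Finset.sum_mul_sum]
    exact Finset.sum_congr rfl fun i _ => Finset.sum_congr rfl fun j _ => by ring
  rw [Complex.ofReal_sub, Complex.ofReal_mul, hu, hs, Complex.ofReal_pow, Finset.mul_sum,
    ← Finset.sum_sub_distrib]
  refine Finset.sum_congr rfl fun i _ => ?_
  rw [Finset.mul_sum, ← Finset.sum_sub_distrib]
  exact Finset.sum_congr rfl fun j _ => by ring

variable {X : Type*} {S : Set X} {φ : X → E} {h : X → ℂ} {M : ℝ}

theorem IsPSDKernelOn.norm_sum_le (hM : 0 ≤ M)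
    (hK : IsPSDKernelOn (fun z w => (M : ℂ) ^ 2 * ⟪φ z, φ w⟫_ℂ - h z * conj (h w)) S)
    {ι : Type*} [Fintype ι] (x : ι → X) (hx : ∀ i, x i ∈ S) (c : ι → ℂ) :
    ‖∑ i, c i * h (x i)‖ ≤ M * ‖∑ i, conj (c i) • φ (x i)‖ := by
  have h₀ := hK.nonneg_of_fintype x hx c
  rw [sum_sum_mul_conj_mul_gram_sub (fun i => φ (x i)) (fun i => h (x i)), Complex.zero_le_real,
    sub_nonneg] at h₀
  rw [← sq_le_sq₀ (norm_nonneg _) (by positivity), mul_pow]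
  exact h₀

theorem isPSDKernelOn_gram_sub_inner (φ : X → E) (S : Set X) (a : E) :
    IsPSDKernelOn (fun z w => (‖a‖ : ℂ) ^ 2 * ⟪φ z, φ w⟫_ℂ - ⟪φ z, a⟫_ℂ * conj ⟪φ w, a⟫_ℂ) S := by
  intro n x _ c
  beta_reduce
  rw [sum_sum_mul_conj_mul_gram_sub (fun i => φ (x i)) (fun i => ⟪φ (x i), a⟫_ℂ),
    Complex.zero_le_real, sub_nonneg]
  have h : ∑ i, c i * ⟪φ (x i), a⟫_ℂ = ⟪∑ i, conj (c i) • φ (x i), a⟫_ℂ := by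
    simp only [sum_inner, inner_smul_left, Complex.conj_conj]
  rw [h, mul_comm, ← mul_pow]
  exact pow_le_pow_left₀ (norm_nonneg _) (norm_inner_le_norm _ _) 2

theorem IsPSDKernelOn.exists_inner_eq [CompleteSpace E] (hM : 0 ≤ M)
    (hK : IsPSDKernelOn (fun z w => (M : ℂ) ^ 2 * ⟪φ z, φ w⟫_ℂ - h z * conj (h w)) S) :
    ∃ a : E, ‖a‖ ≤ M ∧ ∀ z ∈ S, h z = ⟪φ z, a⟫_ℂ := by
  classical
  -- The functional `∑ cᵢ φ(zᵢ) ↦ ∑ cᵢ conj (h zᵢ)` is well defined and bounded by `M` on the span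
  -- of `φ '' S`; extend it by Hahn–Banach and represent it by a vector.
  let T : (S →₀ ℂ) →ₗ[ℂ] E := Finsupp.linearCombination ℂ fun z : S => φ z
  let L : (S →₀ ℂ) →ₗ[ℂ] ℂ := Finsupp.linearCombination ℂ fun z : S => conj (h z)
  have hbound d : ‖L d‖ ≤ M * ‖T d‖ := by
    have hsum := hK.norm_sum_le hM (fun i : d.support => (i : S).1) (fun i => (i : S).2)
      (fun i => conj (d i))
    simp only [Complex.conj_conj] at hsum
    have hL : L d = conj (∑ i : d.support, conj (d i) * h i) := by
      simp only [L, Finsupp.linearCombination_apply, Finsupp.sum, ← Finset.sum_coe_sort d.support,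
        map_sum, map_mul, Complex.conj_conj, smul_eq_mul]
    have hT : T d = ∑ i : d.support, d i • φ i := by
      rw [Finsupp.linearCombination_apply, Finsupp.sum, ← Finset.sum_coe_sort]
    rwa [hL, hT, RCLike.norm_conj]
  obtain ⟨ψ, hψ, hψT⟩ := exists_strongDual_comp_eq T L hM hbound
  refine ⟨(InnerProductSpace.toDual ℂ E).symm ψ, by simpa using hψ, fun z hz => ?_⟩
  have hψz := hψT (Finsupp.single ⟨z, hz⟩ 1)
  simp only [T, L, Finsupp.linearCombination_single, one_smul] at hψz
  rw [← inner_conj_symm, InnerProductSpace.toDual_symm_apply, hψz, Complex.conj_conj]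

end Gram

theorem memℓp_two_iff_summable_sq {α : Type*} {E : α → Type*} [∀ i, NormedAddCommGroup (E i)]
    {f : ∀ i, E i} : Memℓp f 2 ↔ Summable fun i => ‖f i‖ ^ 2 := by
  simpa using memℓp_gen_iff (p := 2) (f := f) (by norm_num)

theorem lp.hasSum_norm_sq {α : Type*} {E : α → Type*} [∀ i, NormedAddCommGroup (E i)]
    (f : lp E 2) : HasSum (fun i => ‖f i‖ ^ 2) (‖f‖ ^ 2) := by
  simpa using lp.hasSum_norm (p := 2) (by norm_num) f

theorem memℓp_two_pow {z : ℂ} (hz : ‖z‖ < 1) : Memℓp (fun n : ℕ => z ^ n) 2 := by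
  have h n : ‖z ^ n‖ ^ 2 = (‖z‖ ^ 2) ^ n := by rw [norm_pow, ← pow_mul, ← pow_mul, mul_comm]
  refine memℓp_two_iff_summable_sq.mpr ?_
  simpa only [h] using
    summable_geometric_of_lt_one (sq_nonneg _) (pow_lt_one₀ (norm_nonneg z) hz two_ne_zero)

theorem norm_mul_conj_lt_one {z w : ℂ} (hz : z ∈ ball (0 : ℂ) 1) (hw : w ∈ ball (0 : ℂ) 1) :
    ‖z * conj w‖ < 1 := by
  rw [mem_ball_zero_iff] at hz hw
  simpa using mul_lt_one_of_nonneg_of_lt_one_left (norm_nonneg z) hz hw.le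

/-- The reproducing kernel of the Hardy space at `z`, as a sequence of Taylor coefficients;
it is junk (zero) off the disk. -/
def szegoVec (z : ℂ) : ℓ²(ℕ, ℂ) :=
  open Classical in
  if hz : z ∈ ball (0 : ℂ) 1 then
    ⟨fun n => conj z ^ n, memℓp_two_pow (by simpa using hz)⟩
  else 0

theorem szegoVec_apply {z : ℂ} (hz : z ∈ ball (0 : ℂ) 1) (n : ℕ) : szegoVec z n = conj z ^ n := by
  simp [szegoVec, hz]

theorem inner_szegoVec {z : ℂ} (hz : z ∈ ball (0 : ℂ) 1) (a : ℓ²(ℕ, ℂ)) :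
    ⟪szegoVec z, a⟫_ℂ = ∑' n, a n * z ^ n := by
  simp [lp.inner_eq_tsum, szegoVec_apply hz]

theorem inner_szegoVec_szegoVec {z w : ℂ} (hz : z ∈ ball (0 : ℂ) 1) (hw : w ∈ ball (0 : ℂ) 1) :
    ⟪szegoVec z, szegoVec w⟫_ℂ = (1 - z * conj w)⁻¹ := by
  rw [inner_szegoVec hz]
  simp only [szegoVec_apply hw, ← mul_pow, mul_comm _ z]
  refine tsum_geometric_of_norm_lt_one ?_
  exact norm_mul_conj_lt_one hz hw

theorem one_sub_mul_conj_ne_zero {z w : ℂ} (hz : z ∈ ball (0 : ℂ) 1) (hw : w ∈ ball (0 : ℂ) 1) :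
    1 - z * conj w ≠ 0 :=
  sub_ne_zero.mpr fun h => (norm_mul_conj_lt_one hz hw).ne (by rw [← h, norm_one])

theorem div_mul_inner_szegoVec_szegoVec {z w u v : ℂ} (hz : z ∈ ball (0 : ℂ) 1)
    (hw : w ∈ ball (0 : ℂ) 1) (hu : u ∈ ball (0 : ℂ) 1) (hv : v ∈ ball (0 : ℂ) 1) :
    (1 - u * conj v) / (1 - z * conj w) * ⟪szegoVec u, szegoVec v⟫_ℂ =
      ⟪szegoVec z, szegoVec w⟫_ℂ := by
  rw [inner_szegoVec_szegoVec hu hv, inner_szegoVec_szegoVec hz hw,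
    div_mul_eq_mul_div, mul_inv_cancel₀ (one_sub_mul_conj_ne_zero hu hv), one_div]

theorem eq_inner_szegoVec_of_differentiableOn {g : ℂ → ℂ}
    (hg : DifferentiableOn ℂ g (ball (0 : ℂ) 1))
    (hmem : Memℓp (fun n => iteratedDeriv n g 0 / n.factorial) 2) {z : ℂ}
    (hz : z ∈ ball (0 : ℂ) 1) :
    g z = ⟪szegoVec z, ⟨_, hmem⟩⟫_ℂ := by
  rw [inner_szegoVec hz, ← Complex.taylorSeries_eq_on_ball' hz hg]
  exact tsum_congr fun n => by simp [div_eq_inv_mul]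

theorem hasFPowerSeriesOnBall_tsum_mul_pow {a : ℕ → ℂ} {C : ℝ} (hC : ∀ n, ‖a n‖ ≤ C) :
    HasFPowerSeriesOnBall (fun z => ∑' n, a n * z ^ n)
      (FormalMultilinearSeries.ofScalars ℂ a) 0 1 := by
  set p := FormalMultilinearSeries.ofScalars ℂ a
  have hp : 1 ≤ p.radius := ENNReal.le_of_forall_nnreal_lt fun r hr =>
    p.le_radius_of_bound C fun n => by
      rw [FormalMultilinearSeries.ofScalars_norm]
      exact (mul_le_of_le_one_right (norm_nonneg _)
        (pow_le_one₀ r.coe_nonneg (by exact_mod_cast hr.le))).trans (hC n)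
  have h := (p.hasFPowerSeriesOnBall (one_pos.trans_le hp)).mono one_pos hp
  rw [← FormalMultilinearSeries.ofScalarsSum, FormalMultilinearSeries.ofScalarsSum_eq_tsum] at h
  simpa only [smul_eq_mul] using h

theorem HasFPowerSeriesOnBall.iteratedDeriv_ofScalars {f : ℂ → ℂ} {a : ℕ → ℂ} {x : ℂ}
    {r : ENNReal} (hf : HasFPowerSeriesOnBall f (FormalMultilinearSeries.ofScalars ℂ a) x r)
    (n : ℕ) : iteratedDeriv n f x = n.factorial * a n := by
  rw [iteratedDeriv_eq_iteratedFDeriv, ← hf.factorial_smul 1 n,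
    FormalMultilinearSeries.ofScalars_apply_eq]
  simp [nsmul_eq_mul]

theorem hasFPowerSeriesOnBall_of_eq_inner_szegoVec (a : ℓ²(ℕ, ℂ)) {h : ℂ → ℂ}
    (hh : ∀ z ∈ ball (0 : ℂ) 1, h z = ⟪szegoVec z, a⟫_ℂ) :
    HasFPowerSeriesOnBall h (FormalMultilinearSeries.ofScalars ℂ a) 0 1 := by
  refine (hasFPowerSeriesOnBall_tsum_mul_pow (lp.norm_apply_le_norm two_ne_zero a)).congr
    fun z hz => ?_
  rw [← ENNReal.ofReal_one, Metric.eball_ofReal] at hz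
  rw [hh z hz, inner_szegoVec hz]

theorem weighted_composition_bounded_H2_general
    (b f : ℂ → ℂ)
    (hb_maps : ∀ z ∈ ball (0 : ℂ) 1, b z ∈ ball (0 : ℂ) 1)
    (hpos : IsPSDKernelOn
      (fun z w => (1 - b z * conj (b w)) / (1 - z * conj w) - f z * conj (f w))
      (ball (0 : ℂ) 1))
    (g : ℂ → ℂ)
    (hg_holo : DifferentiableOn ℂ g (ball (0 : ℂ) 1))
    (hg_sum : Summable (fun n : ℕ => ‖iteratedDeriv n g 0 / (n.factorial : ℂ)‖ ^ 2)) :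
    DifferentiableOn ℂ (fun z => f z * g (b z)) (ball (0 : ℂ) 1) ∧
    Summable (fun n : ℕ =>
      ‖iteratedDeriv n (fun z => f z * g (b z)) 0 / (n.factorial : ℂ)‖ ^ 2) ∧
    ∑' n : ℕ, ‖iteratedDeriv n (fun z => f z * g (b z)) 0 / (n.factorial : ℂ)‖ ^ 2 ≤
      ∑' n : ℕ, ‖iteratedDeriv n g 0 / (n.factorial : ℂ)‖ ^ 2 := by
  have hmem := memℓp_two_iff_summable_sq.mpr hg_sum
  let a : ℓ²(ℕ, ℂ) := ⟨_, hmem⟩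
  have hg : IsPSDKernelOn (fun z w => (‖a‖ : ℂ) ^ 2 * ⟪szegoVec z, szegoVec w⟫_ℂ -
      g z * conj (g w)) (ball (0 : ℂ) 1) :=
    (isPSDKernelOn_gram_sub_inner szegoVec _ a).congr fun z hz w hw => by
      rw [eq_inner_szegoVec_of_differentiableOn hg_holo hmem hz,
        eq_inner_szegoVec_of_differentiableOn hg_holo hmem hw]
  have hfg : IsPSDKernelOn (fun z w => (‖a‖ : ℂ) ^ 2 * ⟪szegoVec z, szegoVec w⟫_ℂ -
      f z * g (b z) * conj (f w * g (b w))) (ball (0 : ℂ) 1) :=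
    (hpos.mul_sub_mul (hg.comp hb_maps)).congr fun z hz w hw => by
      rw [mul_left_comm, div_mul_inner_szegoVec_szegoVec hz hw (hb_maps z hz) (hb_maps w hw)]
  obtain ⟨v, hva, hv⟩ := hfg.exists_inner_eq (norm_nonneg a)
  have hps := hasFPowerSeriesOnBall_of_eq_inner_szegoVec v hv
  have hcoeff n : iteratedDeriv n (fun z => f z * g (b z)) 0 / n.factorial = v n := by
    rw [hps.iteratedDeriv_ofScalars, mul_div_cancel_left₀ _ (by positivity)]
  refine ⟨?_, ?_, ?_⟩
  · simpa only [← ENNReal.ofReal_one, Metric.eball_ofReal] using hps.differentiableOn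
  · simpa only [hcoeff] using (lp.hasSum_norm_sq v).summable
  · rw [tsum_congr fun n => congrArg (‖·‖ ^ 2) (hcoeff n), (lp.hasSum_norm_sq v).tsum_eq]
    exact (pow_le_pow_left₀ (norm_nonneg v) hva 2).trans_eq (lp.hasSum_norm_sq a).tsum_eq.symm

/-- Theorem 1 (Hardy-space form): if `f` lies in the unit ball of the de
Branges–Rovnyak space `H(b)` (expressed by positivity of
`k^b(z,w) − f(z)·conj(f(w))`), then for every `g ∈ H²` the function
`h(z) = f(z)·g(b(z))` is analytic on the disk, lies in `H²`, and
`‖h‖_{H²} ≤ ‖g‖_{H²}` in terms of Taylor coefficients. -/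
theorem weighted_composition_bounded_H2
    (b f : ℂ → ℂ)
    (hb_holo : DifferentiableOn ℂ b (ball (0 : ℂ) 1))
    (hb_maps : ∀ z ∈ ball (0 : ℂ) 1, b z ∈ ball (0 : ℂ) 1)
    (hpos : IsPSDKernelOn
      (fun z w => (1 - b z * conj (b w)) / (1 - z * conj w) - f z * conj (f w))
      (ball (0 : ℂ) 1))
    (g : ℂ → ℂ)
    (hg_holo : DifferentiableOn ℂ g (ball (0 : ℂ) 1))
    (hg_sum : Summable (fun n : ℕ => ‖iteratedDeriv n g 0 / (n.factorial : ℂ)‖ ^ 2)) :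
    DifferentiableOn ℂ (fun z => f z * g (b z)) (ball (0 : ℂ) 1) ∧
    Summable (fun n : ℕ =>
      ‖iteratedDeriv n (fun z => f z * g (b z)) 0 / (n.factorial : ℂ)‖ ^ 2) ∧
    ∑' n : ℕ, ‖iteratedDeriv n (fun z => f z * g (b z)) 0 / (n.factorial : ℂ)‖ ^ 2 ≤
      ∑' n : ℕ, ‖iteratedDeriv n g 0 / (n.factorial : ℂ)‖ ^ 2 :=
  weighted_composition_bounded_H2_general b f hb_maps hpos g hg_holo hg_sum
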